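/- arXiv:0810.5203 — 2 statements merged into one kernel-verified Lean document; each statement's English description precedes it below -/
import Mathlib

section
/- Let f be a pmf on Z_+ with mean λ ∈ (0,∞) and finite support (f_i = 0 for all i ≥ k, for some k). Then for all α ∈ (0,1), the derivative of D(T_α(f)) with respect to α equals λ · D(T_α(S(f)) | T_α(f)). -/
open scoped BigOperators ENNReal Classical
open Filter

/-- `f` is a probability mass function on `ℕ`. -/
def IsPmf (f : ℕ → ℝ) : Prop := (∀ i, 0 ≤ f i) ∧ HasSum f 1

/-- The mean of a pmf on `ℕ`. -/
noncomputable def pmfMean (f : ℕ → ℝ) : ℝ := ∑' i : ℕ, (i : ℝ) * f i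

/-- The Poisson pmf with parameter `lam`. -/
noncomputable def po (lam : ℝ) (i : ℕ) : ℝ := lam ^ i * Real.exp (-lam) / (Nat.factorial i)

/-- The `α`-thinning of a pmf `f`. -/
noncomputable def thin (α : ℝ) (f : ℕ → ℝ) (i : ℕ) : ℝ :=
  ∑' j : ℕ, f j * (Nat.choose j i : ℝ) * α ^ i * (1 - α) ^ (j - i)

/-- Convolution of two pmfs on `ℕ`. -/
def conv (f g : ℕ → ℝ) (i : ℕ) : ℝ := ∑ j ∈ Finset.range (i + 1), f j * g (i - j)

/-- `n`-fold convolution power of a pmf; `convPow f 1 = f`. -/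
def convPow (f : ℕ → ℝ) : ℕ → ℕ → ℝ
  | 0 => fun i => if i = 0 then 1 else 0
  | n + 1 => conv (convPow f n) f

/-- Shannon entropy of a pmf on `ℕ`. -/
noncomputable def ent (f : ℕ → ℝ) : ℝ := -∑' i : ℕ, f i * Real.log (f i)

/-- Relative entropy `D(f | g)`, valued in `ℝ≥0∞`; it is `∞` if the support of `f`
is not contained in that of `g` or if the defining series does not converge. -/
noncomputable def KL (f g : ℕ → ℝ) : ℝ≥0∞ :=
  if (∀ i, g i = 0 → f i = 0) ∧ Summable (fun i : ℕ => f i * Real.log (f i / g i)) then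
    ENNReal.ofReal (∑' i : ℕ, f i * Real.log (f i / g i))
  else ⊤

/-- `D(f) = D(f | po(λ))` where `λ` is the mean of `f`. -/
noncomputable def KLpo (f : ℕ → ℝ) : ℝ≥0∞ := KL f (po (pmfMean f))

/-- The size-biased pmf `S(f)`. -/
noncomputable def sizeBias (f : ℕ → ℝ) (i : ℕ) : ℝ := (i + 1 : ℝ) * f (i + 1) / pmfMean f

/-- Real-valued relative entropy `∑ᵢ fᵢ log(fᵢ/gᵢ)` (all sums here are finite for pmfs
with finite support). -/
noncomputable def KLr (f g : ℕ → ℝ) : ℝ := ∑' i : ℕ, f i * Real.log (f i / g i)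

/-!
Thinning is a mixture of Bernstein polynomials, `T_α f (i) = ∑ⱼ fⱼ bⱼᵢ(α)`, so for finitely
supported `f` every term of `D(T_α f)` is smooth in `α`, and the Bernstein identities give
`(i + 1) T_α f (i + 1) = αλ T_α(S f)(i)` and `d/dα T_α f (i) = λ (T_α(S f)(i - 1) - T_α(S f)(i))`
(with `T_α(S f)(-1) = 0`). Differentiating `∑ᵢ Fᵢ log (Fᵢ / pᵢ)` with `Fᵢ = T_α f (i)` and
`pᵢ = po(αλ)(i)`, the terms without the logarithm cancel: `∑ᵢ Fᵢ' = 0`, and the Poisson score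
`i/α - λ` has mean zero under `T_α f`. Summation by parts turns the rest into
`λ ∑ᵢ T_α(S f)(i) (log (Fᵢ₊₁ / pᵢ₊₁) - log (Fᵢ / pᵢ))`, and since `(i + 1) pᵢ₊₁ = αλ pᵢ`, the first
identity says `Fᵢ₊₁ / pᵢ₊₁ = T_α(S f)(i) / pᵢ`, so each difference is `log (T_α(S f)(i) / Fᵢ)`.
-/

open Polynomial Finset

namespace bernsteinPolynomial

variable {R : Type*} [CommRing R]

theorem sum_range_mul_of_lt {n m : ℕ} (h : n < m) (w : ℕ → R[X]) :
    ∑ ν ∈ range m, w ν * bernsteinPolynomial R n ν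
      = ∑ ν ∈ range (n + 1), w ν * bernsteinPolynomial R n ν :=
  (sum_subset (range_subset_range.mpr h) fun ν _ hν => by
    rw [eq_zero_of_lt R (by simpa using hν), mul_zero]).symm

theorem succ_mul_succ (n ν : ℕ) :
    ((ν + 1 : ℕ) : R[X]) * bernsteinPolynomial R (n + 1) (ν + 1)
      = ((n + 1 : ℕ) : R[X]) * X * bernsteinPolynomial R n ν := by
  have h := congrArg (Nat.cast : ℕ → R[X]) (Nat.add_one_mul_choose_eq n ν)
  push_cast at h ⊢
  simp only [bernsteinPolynomial, Nat.add_sub_add_right]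
  linear_combination (X ^ (ν + 1) * (1 - X) ^ (n - ν)) * h.symm

theorem eval_eq (n ν : ℕ) (a : R) :
    (bernsteinPolynomial R n ν).eval a = n.choose ν * a ^ ν * (1 - a) ^ (n - ν) := by
  simp [bernsteinPolynomial]

end bernsteinPolynomial

theorem HasDerivAt.mul_log_div {F P : ℝ → ℝ} {F' P' x : ℝ} (hF : HasDerivAt F F' x)
    (hP : HasDerivAt P P' x) (hFx : F x ≠ 0) (hPx : P x ≠ 0) :
    HasDerivAt (fun a => F a * Real.log (F a / P a))
      (F' * (Real.log (F x / P x) + 1) - F x * P' / P x) x :=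
  (hF.mul ((hF.div hP hPx).log (div_ne_zero hFx hPx))).congr_deriv <| by
    simp only [Pi.div_apply]
    field_simp
    ring

theorem sum_range_succ_mul_of_telescoping {d G : ℕ → ℝ} (h0 : d 0 = -G 0)
    (hsucc : ∀ i, d (i + 1) = G i - G (i + 1)) (L : ℕ → ℝ) (n : ℕ) :
    ∑ i ∈ range (n + 1), d i * L i = ∑ i ∈ range n, G i * (L (i + 1) - L i) - G n * L n := by
  induction n with
  | zero => simp [h0]
  | succ n ih => rw [sum_range_succ, ih, hsucc, sum_range_succ]; ring

theorem exists_max_support {f : ℕ → ℝ} {k : ℕ} (hk : ∀ i, k ≤ i → f i = 0) (hf : f ≠ 0) :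
    ∃ N, f N ≠ 0 ∧ ∀ j, N < j → f j = 0 := by
  obtain ⟨j, hj⟩ := Function.ne_iff.mp hf
  have hjk : j ≤ k := le_of_not_ge fun h => hj (hk j h)
  refine ⟨Nat.findGreatest (f · ≠ 0) k, Nat.findGreatest_spec (P := (f · ≠ 0)) hjk hj,
    fun i hi => ?_⟩
  by_contra h
  rcases le_or_gt i k with hik | hki
  · exact Nat.findGreatest_is_greatest hi hik h
  · exact h (hk i hki.le)

theorem KLr_eq_sum_range {F : ℕ → ℝ} {n : ℕ} (hF : ∀ i, n ≤ i → F i = 0) (P : ℕ → ℝ) :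
    KLr F P = ∑ i ∈ range n, F i * Real.log (F i / P i) :=
  tsum_eq_sum fun i hi => by rw [hF i (by simpa using hi), zero_mul]

theorem po_pos {c : ℝ} (hc : 0 < c) (i : ℕ) : 0 < po c i := by
  unfold po
  positivity

theorem succ_mul_po_succ (c : ℝ) (i : ℕ) : (i + 1 : ℝ) * po c (i + 1) = c * po c i := by
  simp only [po, Nat.factorial_succ, pow_succ]
  push_cast
  field_simp

theorem hasDerivAt_po {c : ℝ} (hc : c ≠ 0) (i : ℕ) :
    HasDerivAt (fun c => po c i) ((i / c - 1) * po c i) c := by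
  refine (((hasDerivAt_pow i c).mul (hasDerivAt_neg c).exp).div_const _).congr_deriv ?_
  have hpow : (i : ℝ) * c ^ (i - 1) = i / c * c ^ i := by
    cases i with
    | zero => simp
    | succ n => rw [Nat.add_sub_cancel, pow_succ]; field_simp
  rw [po, hpow]
  ring

section Thinning

variable {f : ℕ → ℝ} {m N : ℕ}

theorem thin_eq_sum_bernstein (hf : ∀ j, m ≤ j → f j = 0) (a : ℝ) (i : ℕ) :
    thin a f i = ∑ j ∈ range m, f j * (bernsteinPolynomial ℝ j i).eval a := by
  rw [thin, tsum_eq_sum (s := range m) fun j hj => by simp [hf j (by simpa using hj)]]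
  simp only [bernsteinPolynomial.eval_eq, mul_assoc]

theorem thin_eq_zero_of_le (hf : ∀ j, m ≤ j → f j = 0) (a : ℝ) {i : ℕ} (hi : m ≤ i) :
    thin a f i = 0 := by
  rw [thin_eq_sum_bernstein hf]
  refine sum_eq_zero fun j hj => ?_
  rw [bernsteinPolynomial.eq_zero_of_lt ℝ ((mem_range.mp hj).trans_le hi), eval_zero, mul_zero]

theorem thin_nonneg (hf : ∀ j, 0 ≤ f j) {a : ℝ} (ha : a ∈ Set.Icc 0 1) (i : ℕ) :
    0 ≤ thin a f i :=
  tsum_nonneg fun j => by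
    have := hf j
    have := sub_nonneg.mpr ha.2
    have := ha.1
    positivity

theorem thin_pos (hf : ∀ j, 0 ≤ f j) (hN : ∀ j, N < j → f j = 0)
    (hfN : 0 < f N) {a : ℝ} (ha : a ∈ Set.Ioo 0 1) {i : ℕ} (hi : i ≤ N) : 0 < thin a f i := by
  have := sub_pos.mpr ha.2
  have := ha.1
  rw [thin_eq_sum_bernstein hN]
  refine sum_pos' (fun j _ => ?_) ⟨N, self_mem_range_succ N, ?_⟩
  · have := hf j
    rw [bernsteinPolynomial.eval_eq]
    positivity
  · have : 0 < (N.choose i : ℝ) := mod_cast N.choose_pos hi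
    rw [bernsteinPolynomial.eval_eq]
    positivity

theorem sum_range_thin (hf : ∀ j, m ≤ j → f j = 0) (a : ℝ) :
    ∑ i ∈ range m, thin a f i = ∑ j ∈ range m, f j := by
  simp_rw [thin_eq_sum_bernstein hf]
  rw [sum_comm]
  refine sum_congr rfl fun j hj => ?_
  have := congrArg (eval a) (bernsteinPolynomial.sum_range_mul_of_lt (mem_range.mp hj) fun _ => 1)
  simp_rw [one_mul, bernsteinPolynomial.sum, eval_finsetSum, eval_one] at this
  rw [← mul_sum, this, mul_one]

theorem sum_range_mul_thin (hf : ∀ j, m ≤ j → f j = 0) (a : ℝ) :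
    ∑ i ∈ range m, (i : ℝ) * thin a f i = a * ∑ j ∈ range m, (j : ℝ) * f j := by
  simp_rw [thin_eq_sum_bernstein hf, mul_sum]
  rw [sum_comm]
  refine sum_congr rfl fun j hj => ?_
  have := congrArg (eval a) (bernsteinPolynomial.sum_range_mul_of_lt (mem_range.mp hj) Nat.cast)
  simp_rw [← nsmul_eq_mul, bernsteinPolynomial.sum_smul, eval_finsetSum, eval_smul, eval_X,
    nsmul_eq_mul] at this
  calc _ = f j * ∑ i ∈ range m, (i : ℝ) * (bernsteinPolynomial ℝ j i).eval a := by
        rw [mul_sum]; exact sum_congr rfl fun i _ => by ring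
    _ = _ := by rw [this]; ring

theorem pmfMean_eq_sum_range (hf : ∀ j, m ≤ j → f j = 0) :
    pmfMean f = ∑ j ∈ range m, (j : ℝ) * f j :=
  tsum_eq_sum fun j hj => by rw [hf j (by simpa using hj), mul_zero]

theorem sum_range_thin_mul_sub_pmfMean (hf : ∀ j, m ≤ j → f j = 0)
    (hsum : ∑ j ∈ range m, f j = 1) {a : ℝ} (ha : a ≠ 0) :
    ∑ i ∈ range m, thin a f i * (i / a - pmfMean f) = 0 := by
  calc ∑ i ∈ range m, thin a f i * (i / a - pmfMean f)
      = (∑ i ∈ range m, (i : ℝ) * thin a f i) / a - pmfMean f * ∑ i ∈ range m, thin a f i := by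
        rw [sum_div, mul_sum, ← sum_sub_distrib]
        exact sum_congr rfl fun i _ => by ring
    _ = 0 := by
        rw [sum_range_mul_thin hf, sum_range_thin hf, hsum, ← pmfMean_eq_sum_range hf]
        field_simp
        ring

theorem thin_sizeBias (a : ℝ) (i : ℕ) :
    thin a (sizeBias f) i = thin a (fun j => (j + 1 : ℝ) * f (j + 1)) i / pmfMean f := by
  simp only [thin, sizeBias, ← tsum_div_const]
  exact tsum_congr fun j => by ring

theorem sizeBias_eq_zero_of_le (hf : ∀ j, m + 1 ≤ j → f j = 0) {j : ℕ} (hj : m ≤ j) :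
    sizeBias f j = 0 := by
  rw [sizeBias, hf (j + 1) (by omega), mul_zero, zero_div]

theorem succ_mul_succ_eq_zero_of_le (hf : ∀ j, m ≤ j → f j = 0) :
    ∀ j, m ≤ j → (j + 1 : ℝ) * f (j + 1) = 0 :=
  fun j hj => by rw [hf (j + 1) (by omega), mul_zero]

theorem hasDerivAt_thin_zero (hf : ∀ j, m ≤ j → f j = 0) (hμ : pmfMean f ≠ 0) (α : ℝ) :
    HasDerivAt (fun a => thin a f 0) (-(pmfMean f * thin α (sizeBias f) 0)) α := by
  rw [thin_sizeBias, mul_div_cancel₀ _ hμ,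
    thin_eq_sum_bernstein (succ_mul_succ_eq_zero_of_le hf)]
  simp_rw [thin_eq_sum_bernstein (m := m + 1) fun j hj => hf j (by omega)]
  refine (HasDerivAt.fun_sum fun j _ => (Polynomial.hasDerivAt _ α).const_mul (f j)).congr_deriv ?_
  simp only [sum_range_succ', bernsteinPolynomial.derivative_zero, eval_mul, eval_neg,
    eval_natCast, Nat.cast_zero, neg_zero, zero_mul, mul_zero, add_zero, Nat.add_sub_cancel,
    ← sum_neg_distrib]
  push_cast
  exact sum_congr rfl fun j _ => by ring

theorem hasDerivAt_thin_succ (hf : ∀ j, m ≤ j → f j = 0) (hμ : pmfMean f ≠ 0) (α : ℝ) (i : ℕ) :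
    HasDerivAt (fun a => thin a f (i + 1))
      (pmfMean f * (thin α (sizeBias f) i - thin α (sizeBias f) (i + 1))) α := by
  rw [thin_sizeBias, thin_sizeBias, ← sub_div, mul_div_cancel₀ _ hμ,
    thin_eq_sum_bernstein (succ_mul_succ_eq_zero_of_le hf),
    thin_eq_sum_bernstein (succ_mul_succ_eq_zero_of_le hf), ← sum_sub_distrib]
  simp_rw [thin_eq_sum_bernstein (m := m + 1) fun j hj => hf j (by omega)]
  refine (HasDerivAt.fun_sum fun j _ => (Polynomial.hasDerivAt _ α).const_mul (f j)).congr_deriv ?_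
  simp only [sum_range_succ', bernsteinPolynomial.derivative_succ, eval_mul, eval_sub,
    eval_natCast, Nat.cast_zero, zero_mul, mul_zero, add_zero, Nat.add_sub_cancel]
  push_cast
  exact sum_congr rfl fun j _ => by ring

theorem succ_mul_thin_succ (hf : ∀ j, m ≤ j → f j = 0) (hμ : pmfMean f ≠ 0) (a : ℝ) (i : ℕ) :
    (i + 1 : ℝ) * thin a f (i + 1) = a * pmfMean f * thin a (sizeBias f) i := by
  rw [thin_sizeBias, mul_assoc, mul_div_cancel₀ _ hμ,
    thin_eq_sum_bernstein (succ_mul_succ_eq_zero_of_le hf),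
    thin_eq_sum_bernstein (m := m + 1) fun j hj => hf j (by omega), sum_range_succ',
    bernsteinPolynomial.eq_zero_of_lt ℝ i.succ_pos, eval_zero, mul_zero, add_zero, mul_sum,
    mul_sum]
  refine sum_congr rfl fun j _ => ?_
  have := congrArg (eval a) (bernsteinPolynomial.succ_mul_succ (R := ℝ) j i)
  simp only [eval_mul, eval_natCast, eval_X] at this
  push_cast at this
  linear_combination f (j + 1) * this

theorem sum_range_deriv_thin_mul (hN : ∀ j, N < j → f j = 0)
    (hμ : pmfMean f ≠ 0) (α : ℝ) (L : ℕ → ℝ) :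
    ∑ i ∈ range (N + 1), deriv (fun a => thin a f i) α * L i
      = pmfMean f * ∑ i ∈ range N, thin α (sizeBias f) i * (L (i + 1) - L i) := by
  have hGN : thin α (sizeBias f) N = 0 :=
    thin_eq_zero_of_le (fun j hj => sizeBias_eq_zero_of_le hN hj) α le_rfl
  rw [sum_range_succ_mul_of_telescoping (G := fun i => pmfMean f * thin α (sizeBias f) i)
    (hasDerivAt_thin_zero hN hμ α).deriv
    (fun i => (hasDerivAt_thin_succ hN hμ α i).deriv.trans (mul_sub _ _ _)), hGN, mul_sum]
  simp only [mul_zero, zero_mul, sub_zero, mul_assoc]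

theorem thin_succ_div_po_succ (hf : ∀ j, m ≤ j → f j = 0)
    (hμ : pmfMean f ≠ 0) {a : ℝ} (ha : a ≠ 0) (i : ℕ) :
    thin a f (i + 1) / po (a * pmfMean f) (i + 1)
      = thin a (sizeBias f) i / po (a * pmfMean f) i := by
  have hc : a * pmfMean f ≠ 0 := mul_ne_zero ha hμ
  have hp : ∀ i, po (a * pmfMean f) i ≠ 0 := fun i => by unfold po; positivity
  rw [div_eq_div_iff (hp _) (hp _)]
  refine mul_left_cancel₀ (by positivity : (i + 1 : ℝ) ≠ 0) ?_
  linear_combination po (a * pmfMean f) i * succ_mul_thin_succ hf hμ a i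
    - thin a (sizeBias f) i * succ_mul_po_succ (a * pmfMean f) i

theorem thin_sizeBias_mul_log_sub (hf : ∀ j, 0 ≤ f j)
    (hN : ∀ j, N < j → f j = 0) (hfN : 0 < f N) (hμ : 0 < pmfMean f) {a : ℝ}
    (ha : a ∈ Set.Ioo 0 1) {i : ℕ} (hi : i ≤ N) :
    thin a (sizeBias f) i * (Real.log (thin a f (i + 1) / po (a * pmfMean f) (i + 1))
        - Real.log (thin a f i / po (a * pmfMean f) i))
      = thin a (sizeBias f) i * Real.log (thin a (sizeBias f) i / thin a f i) := by
  have hSf : ∀ j, 0 ≤ sizeBias f j := fun j => by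
    have := hf (j + 1)
    unfold sizeBias
    positivity
  have hF := thin_pos hf hN hfN ha hi
  have hp := po_pos (mul_pos ha.1 hμ) i
  rw [thin_succ_div_po_succ hN hμ.ne' ha.1.ne']
  rcases (thin_nonneg hSf (Set.Ioo_subset_Icc_self ha) i).eq_or_lt with hG | hG
  · rw [← hG, zero_mul, zero_mul]
  · rw [Real.log_div hG.ne' hp.ne', Real.log_div hF.ne' hp.ne', Real.log_div hG.ne' hF.ne']
    ring

theorem hasDerivAt_sum_thin_mul_log_div_po (hf : ∀ j, 0 ≤ f j)
    (hN : ∀ j, N < j → f j = 0) (hfN : 0 < f N) (hsum : ∑ j ∈ range (N + 1), f j = 1)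
    (hμ : 0 < pmfMean f) {α : ℝ} (hα : α ∈ Set.Ioo 0 1) :
    HasDerivAt
      (fun a => ∑ i ∈ range (N + 1), thin a f i * Real.log (thin a f i / po (a * pmfMean f) i))
      (∑ i ∈ range (N + 1), deriv (fun a => thin a f i) α
        * Real.log (thin α f i / po (α * pmfMean f) i)) α := by
  have hc : 0 < α * pmfMean f := mul_pos hα.1 hμ
  have hthin : ∀ i, HasDerivAt (fun a => thin a f i) (deriv (fun a => thin a f i) α) α := by
    rintro (_ | i)
    exacts [(hasDerivAt_thin_zero hN hμ.ne' α).differentiableAt.hasDerivAt,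
      (hasDerivAt_thin_succ hN hμ.ne' α i).differentiableAt.hasDerivAt]
  have hpo : ∀ i, HasDerivAt (fun a => po (a * pmfMean f) i)
      ((i / (α * pmfMean f) - 1) * po (α * pmfMean f) i * pmfMean f) α := fun i =>
    ((hasDerivAt_po hc.ne' i).comp α (hasDerivAt_mul_const (pmfMean f)) :)
  refine (HasDerivAt.fun_sum fun i hi => (hthin i).mul_log_div (hpo i)
    (thin_pos hf hN hfN hα (by simpa [Nat.lt_succ_iff] using hi)).ne'
    (po_pos hc i).ne').congr_deriv ?_
  have hpoint : ∀ i ∈ range (N + 1), deriv (fun a => thin a f i) α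
        * (Real.log (thin α f i / po (α * pmfMean f) i) + 1)
      - thin α f i * ((i / (α * pmfMean f) - 1) * po (α * pmfMean f) i * pmfMean f)
        / po (α * pmfMean f) i
      = deriv (fun a => thin a f i) α * Real.log (thin α f i / po (α * pmfMean f) i)
        + deriv (fun a => thin a f i) α * 1 - thin α f i * (i / α - pmfMean f) := fun i _ => by
    have := (po_pos hc i).ne'
    have := hμ.ne'
    field_simp
  rw [sum_congr rfl hpoint, sum_sub_distrib, sum_add_distrib, sum_range_deriv_thin_mul hN hμ.ne',
    sum_range_deriv_thin_mul hN hμ.ne', sum_range_thin_mul_sub_pmfMean hN hsum hα.1.ne']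
  simp

end Thinning

/-- For a finitely supported pmf `f` with mean `λ ∈ (0,∞)` and `α ∈ (0,1)`,
`(d/dα) D(T_α(f)) = λ · D(T_α(S(f)) | T_α(f))`, where `D(T_α(f)) = D(T_α(f) | po(αλ))`. -/
theorem hasDerivAt_relEntropy_thin (f : ℕ → ℝ) (lam : ℝ) (hf : IsPmf f)
    (hlam : pmfMean f = lam) (hpos : 0 < lam)
    (k : ℕ) (hsupp : ∀ i : ℕ, k ≤ i → f i = 0)
    (α : ℝ) (hα : α ∈ Set.Ioo (0 : ℝ) 1) :
    HasDerivAt (fun a : ℝ => KLr (thin a f) (po (a * lam)))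
      (lam * KLr (thin α (sizeBias f)) (thin α f)) α := by
  obtain ⟨hf0, hf1⟩ := hf
  obtain ⟨N, hfN, hN⟩ :=
    exists_max_support hsupp (by rintro rfl; exact one_ne_zero (hf1.unique hasSum_zero))
  replace hfN := (hf0 N).lt_of_ne' hfN
  subst hlam
  have hsum : ∑ j ∈ range (N + 1), f j = 1 :=
    (hasSum_sum_of_ne_finset_zero fun j hj => hN j (by simpa using hj)).unique hf1
  rw [funext fun a => KLr_eq_sum_range (fun i => thin_eq_zero_of_le hN a) _,
    KLr_eq_sum_range (fun i => thin_eq_zero_of_le (fun j => sizeBias_eq_zero_of_le hN) α) _]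
  refine (hasDerivAt_sum_thin_mul_log_div_po hf0 hN hfN hsum hpos hα).congr_deriv ?_
  rw [sum_range_deriv_thin_mul hN hpos.ne']
  exact congrArg _ (sum_congr rfl fun i hi =>
    thin_sizeBias_mul_log_sub hf0 hN hfN hpos hα (mem_range.mp hi).le)
end

section
/- Let n ≥ 2 and let q^{(1)}, ..., q^{(n)} be pmfs on Z_+ with finite means λ_1, ..., λ_n respectively, each λ_i > 0. Set q = q^{(1)} * ... * q^{(n)}, let q^{(-i)} denote the convolution of all q^{(j)} with j ≠ i, and set β_i = (1 − λ_i/Σ_{j=1}^n λ_j)/(n−1). Then D(q | S(q)) ≤ Σ_{i=1}^n β_i D(q^{(-i)} | S(q^{(-i)})) and D(S(q) | q) ≤ Σ_{i=1}^n β_i D(S(q^{(-i)}) | q^{(-i)}). -/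
open scoped BigOperators ENNReal Classical
open Filter

/-- Convolution of a finite family of pmfs on `ℕ`:
`(q⁽¹⁾ * ⋯ * q⁽ⁿ⁾)_i = ∑_{a₁+⋯+aₙ = i} ∏ⱼ q⁽ʲ⁾_{aⱼ}`. -/
noncomputable def convFam {n : ℕ} (q : Fin n → ℕ → ℝ) (i : ℕ) : ℝ :=
  ∑ a ∈ Fintype.piFinset (fun _ : Fin n => Finset.range (i + 1)),
    if (∑ j, a j) = i then ∏ j, q j (a j) else 0

/-- The point mass at `0` (identity for convolution). -/
def delta0 : ℕ → ℝ := fun i => if i = 0 then 1 else 0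

/-- `q⁽⁻ⁱ⁾`: the convolution of all `q⁽ʲ⁾` with `j ≠ i` (obtained by replacing the `i`-th
factor with the point mass at `0`). -/
noncomputable def convExcept {n : ℕ} (q : Fin n → ℕ → ℝ) (i : Fin n) : ℕ → ℝ :=
  convFam (Function.update q i delta0)

/-!
Let `Pⱼ` be the generating function of `q⁽ʲ⁾`, `Q = ∏ Pⱼ` and `Q₋ᵢ = ∏_{j ≠ i} Pⱼ`. Applying the
Leibniz rule to `Q = Pᵢ Q₋ᵢ` and summing over `i` gives `∑ᵢ Pᵢ Q₋ᵢ' = (n - 1) Q'`; since `S(f)` has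
generating function `F'/λ`, this says `S(q) = ∑ βᵢ q⁽ⁱ⁾ * S(q⁽⁻ⁱ⁾)`, while trivially
`q = ∑ βᵢ q⁽ⁱ⁾ * q⁽⁻ⁱ⁾`. Both inequalities then follow from joint convexity of relative entropy and
from the fact that convolving both arguments with the same pmf does not increase it. Each is the
log-sum inequality applied termwise, once `D(f | g)` is written as the sum of the nonnegative terms
`g klFun (f / g)`, which can be rearranged freely in `ℝ≥0∞`.
-/

open Finset PowerSeries InformationTheory

noncomputable def klTerm (a b : ℝ) : ℝ≥0∞ :=
  if b = 0 ∧ a ≠ 0 then ⊤ else ENNReal.ofReal (b * klFun (a / b))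

lemma mul_klFun_div {a b : ℝ} (hab : b = 0 → a = 0) :
    b * klFun (a / b) = a * Real.log (a / b) + b - a := by
  rcases eq_or_ne b 0 with rfl | hb
  · simp [hab rfl]
  · rw [klFun_apply]
    field_simp

lemma klTerm_of_imp {a b : ℝ} (hab : b = 0 → a = 0) :
    klTerm a b = ENNReal.ofReal (b * klFun (a / b)) :=
  if_neg fun h => h.2 (hab h.1)

lemma klTerm_mul {c : ℝ} (hc : 0 ≤ c) (a b : ℝ) :
    klTerm (c * a) (c * b) = ENNReal.ofReal c * klTerm a b := by
  rcases hc.eq_or_lt with rfl | hc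
  · simp [klTerm]
  · simp only [klTerm, mul_eq_zero, hc.ne', false_or, ne_eq]
    split_ifs
    · exact (ENNReal.mul_top (by simpa using hc)).symm
    · rw [mul_div_mul_left _ _ hc.ne', mul_assoc, ENNReal.ofReal_mul hc.le]

/-- The log-sum inequality, as Jensen's inequality for the perspective of `klFun`. -/
lemma sum_mul_klFun_div_le {ι : Type*} (s : Finset ι) {a b : ι → ℝ}
    (ha : ∀ i ∈ s, 0 ≤ a i) (hb : ∀ i ∈ s, 0 ≤ b i)
    (hab : ∀ i ∈ s, b i = 0 → a i = 0) :
    (∑ i ∈ s, b i) * klFun ((∑ i ∈ s, a i) / ∑ i ∈ s, b i) ≤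
      ∑ i ∈ s, b i * klFun (a i / b i) := by
  have hterm : ∀ i ∈ s, 0 ≤ b i * klFun (a i / b i) := fun i hi =>
    mul_nonneg (hb i hi) (klFun_nonneg (div_nonneg (ha i hi) (hb i hi)))
  rcases (sum_nonneg hb).eq_or_lt with hB | hB
  · rw [← hB, zero_mul]
    exact sum_nonneg hterm
  have hmean :
      ∑ i ∈ s, (b i / ∑ j ∈ s, b j) • (a i / b i) =
        (∑ i ∈ s, a i) / ∑ i ∈ s, b i := by
    rw [sum_div]
    refine sum_congr rfl fun i hi => ?_
    rcases eq_or_ne (b i) 0 with h | h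
    · simp [h, hab i hi h]
    · rw [smul_eq_mul]; field_simp
  have hJensen := convexOn_klFun.map_sum_le (t := s) (w := fun i => b i / ∑ j ∈ s, b j)
    (p := fun i => a i / b i) (fun i hi => div_nonneg (hb i hi) hB.le)
    (by rw [← sum_div, div_self hB.ne']) (fun i hi => div_nonneg (ha i hi) (hb i hi))
  rw [hmean] at hJensen
  calc (∑ i ∈ s, b i) * klFun ((∑ i ∈ s, a i) / ∑ i ∈ s, b i)
      ≤ (∑ i ∈ s, b i) * ∑ i ∈ s, (b i / ∑ j ∈ s, b j) • klFun (a i / b i) :=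
        mul_le_mul_of_nonneg_left hJensen hB.le
    _ = ∑ i ∈ s, b i * klFun (a i / b i) := by
        rw [mul_sum]
        refine sum_congr rfl fun i _ => ?_
        rw [smul_eq_mul]; field_simp

lemma klTerm_sum_le {ι : Type*} (s : Finset ι) {a b : ι → ℝ}
    (ha : ∀ i ∈ s, 0 ≤ a i) (hb : ∀ i ∈ s, 0 ≤ b i) :
    klTerm (∑ i ∈ s, a i) (∑ i ∈ s, b i) ≤ ∑ i ∈ s, klTerm (a i) (b i) := by
  by_cases hsupp : ∀ i ∈ s, b i = 0 → a i = 0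
  · have hsum : ∑ i ∈ s, b i = 0 → ∑ i ∈ s, a i = 0 := fun h =>
      sum_eq_zero fun i hi => hsupp i hi ((sum_eq_zero_iff_of_nonneg hb).1 h i hi)
    rw [klTerm_of_imp hsum, sum_congr rfl fun i hi => klTerm_of_imp (hsupp i hi),
      ← ENNReal.ofReal_sum_of_nonneg fun i hi =>
        mul_nonneg (hb i hi) (klFun_nonneg (div_nonneg (ha i hi) (hb i hi)))]
    exact ENNReal.ofReal_le_ofReal (sum_mul_klFun_div_le s ha hb hsupp)
  · push Not at hsupp
    obtain ⟨i, hi, hbi, hai⟩ := hsupp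
    rw [ENNReal.sum_eq_top.2 ⟨i, hi, if_pos ⟨hbi, hai⟩⟩]
    exact le_top

lemma KL_eq_tsum_klTerm {f g : ℕ → ℝ} (hf : IsPmf f) (hg : IsPmf g) :
    KL f g = ∑' m, klTerm (f m) (g m) := by
  by_cases hsupp : ∀ m, g m = 0 → f m = 0
  · set φ : ℕ → ℝ := fun m => g m * klFun (f m / g m)
    have hφ0 : ∀ m, 0 ≤ φ m := fun m =>
      mul_nonneg (hg.1 m) (klFun_nonneg (div_nonneg (hf.1 m) (hg.1 m)))
    have hφ : φ = fun m => f m * Real.log (f m / g m) + g m - f m :=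
      funext fun m => mul_klFun_div (hsupp m)
    simp only [klTerm_of_imp (hsupp _)]
    by_cases hsum : Summable fun m => f m * Real.log (f m / g m)
    · have hφs : HasSum φ (∑' m, f m * Real.log (f m / g m)) := by
        rw [hφ]
        simpa using (hsum.hasSum.add hg.2).sub hf.2
      rw [KL, if_pos ⟨hsupp, hsum⟩, ← hφs.tsum_eq,
        ENNReal.ofReal_tsum_of_nonneg hφ0 hφs.summable]
    · rw [KL, if_neg fun h => hsum h.2, eq_comm]
      by_contra hfin
      apply hsum
      have hφs : Summable φ :=
        (ENNReal.summable_toReal hfin).congr fun m => ENNReal.toReal_ofReal (hφ0 m)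
      rw [hφ] at hφs
      exact ((hφs.sub hg.2.summable).add hf.2.summable).congr fun m => by ring
  · push Not at hsupp
    obtain ⟨m, hgm, hfm⟩ := hsupp
    rw [KL, if_neg fun h => hfm (h.1 m hgm)]
    exact (ENNReal.tsum_eq_top_of_eq_top ⟨m, if_pos ⟨hgm, hfm⟩⟩).symm

lemma IsPmf.mix {ι : Type*} [Fintype ι] {w : ι → ℝ} (hw : ∀ i, 0 ≤ w i)
    (hw1 : ∑ i, w i = 1) {f : ι → ℕ → ℝ} (hf : ∀ i, IsPmf (f i)) :
    IsPmf fun m => ∑ i, w i * f i m :=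
  ⟨fun m => sum_nonneg fun i _ => mul_nonneg (hw i) ((hf i).1 m), by
    simpa [hw1] using hasSum_sum (s := univ) fun i _ => (hf i).2.mul_left (w i)⟩

lemma HasSum.conv {f g : ℕ → ℝ} {a b : ℝ} (hf0 : ∀ i, 0 ≤ f i) (hg0 : ∀ i, 0 ≤ g i)
    (hf : HasSum f a) (hg : HasSum g b) : HasSum (conv f g) (a * b) := by
  have h := hasSum_sum_range_mul_of_summable_norm (f := f) (g := g)
    (by simpa only [Real.norm_of_nonneg (hf0 _)] using hf.summable)
    (by simpa only [Real.norm_of_nonneg (hg0 _)] using hg.summable)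
  rwa [hf.tsum_eq, hg.tsum_eq] at h

lemma IsPmf.conv {f g : ℕ → ℝ} (hf : IsPmf f) (hg : IsPmf g) : IsPmf (conv f g) :=
  ⟨fun k => sum_nonneg fun j _ => mul_nonneg (hf.1 j) (hg.1 _),
    by simpa using hf.2.conv hf.1 hg.1 hg.2⟩

lemma ENNReal.tsum_sum_range_mul (f g : ℕ → ℝ≥0∞) :
    ∑' n, ∑ k ∈ range (n + 1), f k * g (n - k) = (∑' n, f n) * ∑' n, g n := by
  simp_rw [← Nat.sum_antidiagonal_eq_sum_range_succ fun k l => f k * g l,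
    ← ENNReal.tsum_mul_right, ← ENNReal.tsum_mul_left, ← ENNReal.tsum_prod,
    ← HasAntidiagonal.sigmaAntidiagonalEquivProd.tsum_eq, ENNReal.tsum_sigma',
    ← Finset.tsum_subtype]
  rfl

lemma KL_mix_le {ι : Type*} [Fintype ι] {w : ι → ℝ} (hw : ∀ i, 0 ≤ w i)
    (hw1 : ∑ i, w i = 1) {f g : ι → ℕ → ℝ} (hf : ∀ i, IsPmf (f i))
    (hg : ∀ i, IsPmf (g i)) :
    KL (fun m => ∑ i, w i * f i m) (fun m => ∑ i, w i * g i m) ≤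
      ∑ i, ENNReal.ofReal (w i) * KL (f i) (g i) := by
  simp_rw [KL_eq_tsum_klTerm (.mix hw hw1 hf) (.mix hw hw1 hg), KL_eq_tsum_klTerm (hf _) (hg _),
    ← ENNReal.tsum_mul_left, ← Summable.tsum_finsetSum fun _ _ => ENNReal.summable]
  refine ENNReal.tsum_le_tsum fun m => (klTerm_sum_le _ ?_ ?_).trans_eq ?_
  · exact fun i _ => mul_nonneg (hw i) ((hf i).1 m)
  · exact fun i _ => mul_nonneg (hw i) ((hg i).1 m)
  · exact sum_congr rfl fun i _ => klTerm_mul (hw i) _ _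

lemma KL_conv_le {c f g : ℕ → ℝ} (hc : IsPmf c) (hf : IsPmf f) (hg : IsPmf g) :
    KL (conv c f) (conv c g) ≤ KL f g := by
  rw [KL_eq_tsum_klTerm (hc.conv hf) (hc.conv hg), KL_eq_tsum_klTerm hf hg]
  calc ∑' k, klTerm (conv c f k) (conv c g k)
      ≤ ∑' k, ∑ j ∈ range (k + 1),
          ENNReal.ofReal (c j) * klTerm (f (k - j)) (g (k - j)) := by
        refine ENNReal.tsum_le_tsum fun k => (klTerm_sum_le _ ?_ ?_).trans_eq ?_
        · exact fun j _ => mul_nonneg (hc.1 j) (hf.1 _)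
        · exact fun j _ => mul_nonneg (hc.1 j) (hg.1 _)
        · exact sum_congr rfl fun j _ => klTerm_mul (hc.1 j) _ _
    _ = ∑' m, klTerm (f m) (g m) := by
        rw [ENNReal.tsum_sum_range_mul (fun j => ENNReal.ofReal (c j)) fun m => klTerm (f m) (g m),
          ← ENNReal.ofReal_tsum_of_nonneg hc.1 hc.2.summable,
          hc.2.tsum_eq, ENNReal.ofReal_one, one_mul]

lemma KL_mix_conv_le {ι : Type*} [Fintype ι] {w : ι → ℝ} (hw : ∀ i, 0 ≤ w i)
    (hw1 : ∑ i, w i = 1) {c f g : ι → ℕ → ℝ} (hc : ∀ i, IsPmf (c i))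
    (hf : ∀ i, IsPmf (f i)) (hg : ∀ i, IsPmf (g i)) :
    KL (fun m => ∑ i, w i * conv (c i) (f i) m) (fun m => ∑ i, w i * conv (c i) (g i) m) ≤
      ∑ i, ENNReal.ofReal (w i) * KL (f i) (g i) :=
  (KL_mix_le hw hw1 (fun i => (hc i).conv (hf i)) fun i => (hc i).conv (hg i)).trans <|
    sum_le_sum fun i _ => mul_le_mul_right (KL_conv_le (hc i) (hf i) (hg i)) _

lemma coeff_mul_eq_conv (φ ψ : ℝ⟦X⟧) (k : ℕ) :
    coeff k (φ * ψ) = conv (fun m => coeff m φ) (fun m => coeff m ψ) k := by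
  rw [coeff_mul, Nat.sum_antidiagonal_eq_sum_range_succ_mk, conv]

lemma mk_conv (f g : ℕ → ℝ) : mk (conv f g) = mk f * mk g := by
  ext k
  simp [coeff_mul_eq_conv]

lemma mk_delta0 : mk delta0 = 1 := by
  ext k
  simp [delta0, coeff_one]

lemma mk_convFam {n : ℕ} (q : Fin n → ℕ → ℝ) : mk (convFam q) = ∏ j, mk (q j) := by
  ext k
  rw [coeff_mk, coeff_prod, convFam, ← sum_filter]
  refine sum_equiv Finsupp.equivFunOnFinite.symm (fun a => ?_) fun a _ => by simp
  simp only [mem_filter, Fintype.mem_piFinset, mem_range, mem_finsuppAntidiag,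
    Finsupp.coe_equivFunOnFinite_symm, subset_univ, and_true]
  refine ⟨And.right, fun hsum => ⟨fun j => ?_, hsum⟩⟩
  exact Nat.lt_succ_of_le (hsum ▸ single_le_sum (fun _ _ => Nat.zero_le _) (mem_univ j))

lemma mk_convExcept {n : ℕ} (q : Fin n → ℕ → ℝ) (i : Fin n) :
    mk (convExcept q i) = ∏ j ∈ univ.erase i, mk (q j) := by
  simp_rw [convExcept, mk_convFam, Function.apply_update (fun _ => mk), mk_delta0,
    prod_update_of_mem (mem_univ i), sdiff_singleton_eq_erase, one_mul]

lemma convFam_eq_conv_convExcept {n : ℕ} (q : Fin n → ℕ → ℝ) (i : Fin n) :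
    convFam q = conv (q i) (convExcept q i) := by
  have h : mk (convFam q) = mk (conv (q i) (convExcept q i)) := by
    rw [mk_conv, mk_convFam, mk_convExcept]
    exact (mul_prod_erase _ (fun j => mk (q j)) (mem_univ i)).symm
  funext k
  simpa using congrArg (coeff k) h

lemma mk_sizeBias (f : ℕ → ℝ) : mk (sizeBias f) = (pmfMean f)⁻¹ • d⁄dX ℝ (mk f) := by
  ext k
  simp only [coeff_mk, sizeBias, map_smul, coeff_derivative, smul_eq_mul]
  ring

theorem Derivation.leibniz_finset_prod {R A M : Type*} [CommSemiring R] [CommSemiring A]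
    [Algebra R A] [AddCommMonoid M] [Module A M] [Module R M] [IsScalarTower R A M]
    (D : Derivation R A M) {ι : Type*} [DecidableEq ι] (s : Finset ι) (f : ι → A) :
    D (∏ i ∈ s, f i) = ∑ i ∈ s, (∏ j ∈ s.erase i, f j) • D (f i) := by
  induction s using Finset.induction_on with
  | empty => simp
  | insert a s ha ih =>
    rw [prod_insert ha, D.leibniz, ih, sum_insert ha, erase_insert ha, smul_sum, add_comm]
    congr 1
    refine sum_congr rfl fun i hi => ?_
    rw [erase_insert_of_ne (ne_of_mem_of_not_mem hi ha).symm,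
      prod_insert fun h => ha (mem_of_mem_erase h), mul_smul]

theorem Derivation.sum_smul_map_prod_erase {R A M : Type*} [CommSemiring R] [CommSemiring A]
    [Algebra R A] [AddCommMonoid M] [Module A M] [Module R M] [IsScalarTower R A M]
    (D : Derivation R A M) {ι : Type*} [DecidableEq ι] (s : Finset ι) (f : ι → A) :
    ∑ i ∈ s, f i • D (∏ j ∈ s.erase i, f j) + D (∏ i ∈ s, f i) =
      #s • D (∏ i ∈ s, f i) := by
  calc ∑ i ∈ s, f i • D (∏ j ∈ s.erase i, f j) + D (∏ i ∈ s, f i)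
      = ∑ i ∈ s, D (f i * ∏ j ∈ s.erase i, f j) := by
        simp_rw [D.leibniz_finset_prod s, ← sum_add_distrib, D.leibniz]
    _ = #s • D (∏ i ∈ s, f i) := by
        rw [← sum_const]
        exact sum_congr rfl fun i hi => by rw [mul_prod_erase s f hi]

/-- `φ` generates a pmf with mean `μ = φ'(1)`. -/
def IsPGF (φ : ℝ⟦X⟧) (μ : ℝ) : Prop :=
  IsPmf (fun k => coeff k φ) ∧ HasSum (fun k => coeff k (d⁄dX ℝ φ)) μ

lemma isPGF_mk {f : ℕ → ℝ} {μ : ℝ} :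
    IsPGF (mk f) μ ↔ IsPmf f ∧ HasSum (fun k : ℕ => (k : ℝ) * f k) μ := by
  have h : HasSum (fun k => coeff k (d⁄dX ℝ (mk f))) μ ↔
      HasSum (fun k : ℕ => (k : ℝ) * f k) μ := by
    simpa [coeff_derivative, mul_comm] using
      hasSum_nat_add_iff' (f := fun k : ℕ => (k : ℝ) * f k) (g := μ) 1
  simp only [IsPGF, coeff_mk, h]

lemma isPGF_one : IsPGF 1 0 := by
  refine ⟨⟨fun k => ?_, ?_⟩, ?_⟩
  · simp only [coeff_one]; split_ifs <;> norm_num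
  · simpa [coeff_one] using hasSum_ite_eq 0 (1 : ℝ)
  · simp [hasSum_zero]

lemma IsPGF.coeff_derivative_nonneg {φ : ℝ⟦X⟧} {μ : ℝ} (h : IsPGF φ μ) (k : ℕ) :
    0 ≤ coeff k (d⁄dX ℝ φ) := by
  rw [coeff_derivative]
  exact mul_nonneg (h.1.1 _) (by positivity)

lemma IsPGF.mul {φ ψ : ℝ⟦X⟧} {a b : ℝ} (hφ : IsPGF φ a) (hψ : IsPGF ψ b) :
    IsPGF (φ * ψ) (a + b) := by
  refine ⟨?_, ?_⟩
  · simpa only [coeff_mul_eq_conv] using hφ.1.conv hψ.1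
  · simp only [Derivation.leibniz, smul_eq_mul, map_add, coeff_mul_eq_conv]
    simpa [add_comm] using (hφ.1.2.conv hφ.1.1 hψ.coeff_derivative_nonneg hψ.2).add
      (hψ.1.2.conv hψ.1.1 hφ.coeff_derivative_nonneg hφ.2)

lemma IsPGF.prod {ι : Type*} [DecidableEq ι] {s : Finset ι} {φ : ι → ℝ⟦X⟧}
    {μ : ι → ℝ} (h : ∀ i ∈ s, IsPGF (φ i) (μ i)) :
    IsPGF (∏ i ∈ s, φ i) (∑ i ∈ s, μ i) := by
  induction s using Finset.induction_on with
  | empty => simpa using isPGF_one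
  | insert a s ha ih =>
    rw [prod_insert ha, sum_insert ha]
    exact (h a (mem_insert_self a s)).mul (ih fun i hi => h i (mem_insert_of_mem hi))

lemma IsPGF.pmfMean_eq {f : ℕ → ℝ} {μ : ℝ} (h : IsPGF (mk f) μ) : pmfMean f = μ :=
  (isPGF_mk.1 h).2.tsum_eq

lemma IsPGF.isPmf_sizeBias {f : ℕ → ℝ} {μ : ℝ} (h : IsPGF (mk f) μ) (hμ : 0 < μ) :
    IsPmf (sizeBias f) := by
  have hS : sizeBias f = fun k => coeff k (d⁄dX ℝ (mk f)) / μ := by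
    ext k
    rw [← coeff_mk k (sizeBias f), mk_sizeBias, h.pmfMean_eq, map_smul, smul_eq_mul,
      inv_mul_eq_div]
  rw [hS]
  exact ⟨fun k => div_nonneg (h.coeff_derivative_nonneg k) hμ.le,
    by simpa [hμ.ne'] using h.2.div_const μ⟩

lemma sizeBias_convFam {n : ℕ} (q : Fin n → ℕ → ℝ) (hn : (n : ℝ) - 1 ≠ 0)
    (hμ : ∀ i, pmfMean (convExcept q i) ≠ 0) :
    sizeBias (convFam q) = fun k => ∑ i, pmfMean (convExcept q i) /
      (((n : ℝ) - 1) * pmfMean (convFam q)) * conv (q i) (sizeBias (convExcept q i)) k := by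
  funext k
  set P : Fin n → ℝ⟦X⟧ := fun j => mk (q j)
  set c : Fin n → ℝ := fun i => coeff k (P i * d⁄dX ℝ (∏ j ∈ univ.erase i, P j))
  have hsum : ∑ i, c i = ((n : ℝ) - 1) * coeff k (d⁄dX ℝ (∏ j, P j)) := by
    have h := congrArg (coeff k) ((d⁄dX ℝ).sum_smul_map_prod_erase univ P)
    simp only [map_add, map_sum, map_nsmul, card_univ, Fintype.card_fin, smul_eq_mul] at h
    rw [nsmul_eq_mul] at h
    linarith
  have hconv : ∀ i,
      conv (q i) (sizeBias (convExcept q i)) k = (pmfMean (convExcept q i))⁻¹ * c i := by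
    intro i
    rw [← coeff_mk k (conv _ _), mk_conv, mk_sizeBias, mk_convExcept, mul_smul_comm, map_smul,
      smul_eq_mul]
  rw [← coeff_mk k (sizeBias _), mk_sizeBias, mk_convFam, map_smul, smul_eq_mul]
  have hterm : ∀ i, pmfMean (convExcept q i) / (((n : ℝ) - 1) * pmfMean (convFam q)) *
      ((pmfMean (convExcept q i))⁻¹ * c i) =
        (((n : ℝ) - 1) * pmfMean (convFam q))⁻¹ * c i := by
    intro i
    field_simp [hμ i]
  simp_rw [hconv, hterm]
  rw [← mul_sum, hsum, mul_inv, mul_mul_mul_comm, inv_mul_cancel₀ hn, one_mul]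

lemma isPGF_convFam {n : ℕ} {q : Fin n → ℕ → ℝ} {lam : Fin n → ℝ}
    (h : ∀ j, IsPGF (mk (q j)) (lam j)) : IsPGF (mk (convFam q)) (∑ j, lam j) :=
  mk_convFam q ▸ IsPGF.prod fun j _ => h j

lemma isPGF_convExcept {n : ℕ} {q : Fin n → ℕ → ℝ} {lam : Fin n → ℝ}
    (h : ∀ j, IsPGF (mk (q j)) (lam j)) (i : Fin n) :
    IsPGF (mk (convExcept q i)) (∑ j, lam j - lam i) := by
  rw [mk_convExcept, ← sum_erase_eq_sub (mem_univ i)]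
  exact IsPGF.prod fun j _ => h j

lemma sum_one_sub_div_sum_div {n : ℕ} {lam : Fin n → ℝ} (hΛ : ∑ j, lam j ≠ 0)
    (hn : (n : ℝ) - 1 ≠ 0) : ∑ i, (1 - lam i / ∑ j, lam j) / ((n : ℝ) - 1) = 1 := by
  rw [← sum_div, sum_sub_distrib, ← sum_div, div_self hΛ, sum_const, card_univ,
    Fintype.card_fin, nsmul_one, div_self hn]

/-- For `n ≥ 2` pmfs `q⁽ⁱ⁾` with means `λᵢ > 0`, with `q = q⁽¹⁾ * ⋯ * q⁽ⁿ⁾` and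
`βᵢ = (1 − λᵢ/∑ λⱼ)/(n−1)`:
`D(q | S(q)) ≤ ∑ βᵢ D(q⁽⁻ⁱ⁾ | S(q⁽⁻ⁱ⁾))` and `D(S(q) | q) ≤ ∑ βᵢ D(S(q⁽⁻ⁱ⁾) | q⁽⁻ⁱ⁾)`. -/
theorem relEntropy_sizeBias_convFam_le (n : ℕ) (hn : 2 ≤ n) (q : Fin n → ℕ → ℝ)
    (lam : Fin n → ℝ) (hq : ∀ i, IsPmf (q i))
    (hmean : ∀ i, Summable (fun k : ℕ => (k : ℝ) * q i k))
    (hlam : ∀ i, pmfMean (q i) = lam i) (hpos : ∀ i, 0 < lam i) :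
    KL (convFam q) (sizeBias (convFam q)) ≤
      ∑ i : Fin n, ENNReal.ofReal ((1 - lam i / ∑ j : Fin n, lam j) / ((n : ℝ) - 1)) *
        KL (convExcept q i) (sizeBias (convExcept q i)) ∧
    KL (sizeBias (convFam q)) (convFam q) ≤
      ∑ i : Fin n, ENNReal.ofReal ((1 - lam i / ∑ j : Fin n, lam j) / ((n : ℝ) - 1)) *
        KL (sizeBias (convExcept q i)) (convExcept q i) := by
  have hn1 : (0 : ℝ) < n - 1 := sub_pos.2 (by exact_mod_cast hn)
  have hP : ∀ j, IsPGF (mk (q j)) (lam j) := fun j =>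
    isPGF_mk.2 ⟨hq j, hlam j ▸ (hmean j).hasSum⟩
  have hΛi : ∀ i, lam i < ∑ j, lam j := fun i => by
    have : Nontrivial (Fin n) := Fin.nontrivial_iff_two_le.2 hn
    obtain ⟨j, hji⟩ := exists_ne i
    exact single_lt_sum hji (mem_univ i) (mem_univ j) (hpos j) fun k _ _ => (hpos k).le
  have hΛ : 0 < ∑ j, lam j := (hpos _).trans (hΛi ⟨0, by omega⟩)
  set β : Fin n → ℝ := fun i => (1 - lam i / ∑ j, lam j) / ((n : ℝ) - 1)
  have hβ0 : ∀ i, 0 ≤ β i := fun i =>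
    div_nonneg (sub_nonneg.2 ((div_le_one hΛ).2 (hΛi i).le)) hn1.le
  have hβ1 : ∑ i, β i = 1 := sum_one_sub_div_sum_div hΛ.ne' hn1.ne'
  have hmixQ : convFam q = fun k => ∑ i, β i * conv (q i) (convExcept q i) k := by
    simp_rw [← convFam_eq_conv_convExcept, ← sum_mul, hβ1, one_mul]
  have hmixS : sizeBias (convFam q) =
      fun k => ∑ i, β i * conv (q i) (sizeBias (convExcept q i)) k := by
    rw [sizeBias_convFam q hn1.ne' fun i =>
      (isPGF_convExcept hP i).pmfMean_eq ▸ (sub_pos.2 (hΛi i)).ne']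
    simp_rw [(isPGF_convExcept hP _).pmfMean_eq, (isPGF_convFam hP).pmfMean_eq]
    congr! 3
    simp only [β]
    field_simp
  have hQ : ∀ i, IsPmf (convExcept q i) := fun i => (isPGF_mk.1 (isPGF_convExcept hP i)).1
  have hS : ∀ i, IsPmf (sizeBias (convExcept q i)) := fun i =>
    (isPGF_convExcept hP i).isPmf_sizeBias (sub_pos.2 (hΛi i))
  rw [hmixS, hmixQ]
  exact ⟨KL_mix_conv_le hβ0 hβ1 hq hQ hS, KL_mix_conv_le hβ0 hβ1 hq hS hQ⟩
end
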